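/- arXiv:1810.00771 — 8 statements merged into one kernel-verified Lean document; each statement's English description precedes it below -/
import Mathlib

section
/- Let F = (Args, Atts) be an AAF, η ∉ Args, and B ⊆ Args. Let F↾(Args\B) = (Args \ B, Atts ∩ ((Args\B) × (Args\B))) be the induced sub-framework obtained by deleting the arguments in B, and let F_{η,B} = (Args ∪ {η}, Atts ∪ {(η,b) : b ∈ B}), in which η attacks exactly the arguments of B and is attacked by no argument. Then for every S ⊆ Args \ B: S is admissible in F↾(Args\B) if and only if S ∪ {η} is admissible in F_{η,B}. -/
variable {α : Type*}

def conflictFree (Atts : Set (α × α)) (S : Set α) : Prop :=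
  ∀ a ∈ S, ∀ b ∈ S, (a, b) ∉ Atts

def acceptable (Args : Set α) (Atts : Set (α × α)) (S : Set α) (a : α) : Prop :=
  ∀ b ∈ Args, (b, a) ∈ Atts → ∃ c ∈ S, (c, b) ∈ Atts

def admissible (Args : Set α) (Atts : Set (α × α)) (S : Set α) : Prop :=
  S ⊆ Args ∧ conflictFree Atts S ∧ ∀ a ∈ S, acceptable Args Atts S a

theorem stmt_1 (Args : Set α) (Atts : Set (α × α))
    (hAtts : Atts ⊆ Args ×ˢ Args) (η : α) (hη : η ∉ Args)
    (B : Set α) (hB : B ⊆ Args)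
    (S : Set α) (hS : S ⊆ Args \ B) :
    admissible (Args \ B) (Atts ∩ ((Args \ B) ×ˢ (Args \ B))) S ↔
      admissible (Args ∪ {η}) (Atts ∪ {q : α × α | ∃ b ∈ B, q = (η, b)}) (S ∪ {η}) := by
  have hSA : S ⊆ Args := fun a ha => (hS ha).1
  have hSB : ∀ a ∈ S, a ∉ B := fun a ha => (hS ha).2
  have hηS : η ∉ S := fun h => hη (hSA h)
  constructor
  · rintro ⟨_, hcf, hacc⟩
    refine ⟨?_, ?_, ?_⟩
    · rintro a (ha | rfl)
      · exact Or.inl (hSA ha)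
      · exact Or.inr rfl
    · rintro a (ha | rfl) b (hb | rfl) hab
      · rcases hab with hab | ⟨b', hb', heq⟩
        · exact hcf a ha b hb ⟨hab, hS ha, hS hb⟩
        · obtain ⟨rfl, rfl⟩ := Prod.mk.injEq _ _ _ _ ▸ heq
          exact hηS ha
      · rcases hab with hab | ⟨b', hb', heq⟩
        · exact hη ((hAtts hab).2)
        · exact hηS ((Prod.mk.injEq _ _ _ _ ▸ heq).1 ▸ ha)
      · rcases hab with hab | ⟨b', hb', heq⟩
        · exact hη ((hAtts hab).1)
        · exact hSB b hb ((Prod.mk.injEq _ _ _ _ ▸ heq).2 ▸ hb')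
      · rcases hab with hab | ⟨b', hb', heq⟩
        · exact hη ((hAtts hab).1)
        · exact hη (hB ((Prod.mk.injEq _ _ _ _ ▸ heq).2 ▸ hb'))
    · rintro a (ha | rfl) b hb hba
      · rcases hba with hba | ⟨b', hb', heq⟩
        · have hbA : b ∈ Args := (hAtts hba).1
          by_cases hbB : b ∈ B
          · exact ⟨η, Or.inr rfl, Or.inr ⟨b, hbB, rfl⟩⟩
          · obtain ⟨c, hc, hcb⟩ := hacc a ha b ⟨hbA, hbB⟩ ⟨hba, ⟨hbA, hbB⟩, hS ha⟩
            exact ⟨c, Or.inl hc, Or.inl hcb.1⟩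
        · obtain ⟨h1, h2⟩ := Prod.mk.injEq _ _ _ _ ▸ heq
          exact absurd (h2.symm ▸ hb') (hSB a ha)
      · rcases hba with hba | ⟨b', hb', heq⟩
        · exact absurd (hAtts hba).2 hη
        · obtain ⟨h1, h2⟩ := Prod.mk.injEq _ _ _ _ ▸ heq
          exact absurd (hB (h2 ▸ hb')) hη
  · rintro ⟨_, hcf, hacc⟩
    refine ⟨hS, ?_, ?_⟩
    · intro a ha b hb hab
      exact hcf a (Or.inl ha) b (Or.inl hb) (Or.inl hab.1)
    · intro a ha b hb hba
      obtain ⟨c, hc, hcb⟩ := hacc a (Or.inl ha) b (Or.inl hb.1) (Or.inl hba.1)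
      rcases hc with hc | rfl
      · rcases hcb with hcb | ⟨b', hb', heq⟩
        · exact ⟨c, hc, hcb, hS hc, hb⟩
        · obtain ⟨rfl, rfl⟩ := Prod.mk.injEq _ _ _ _ ▸ heq
          exact (hηS hc).elim
      · rcases hcb with hcb | ⟨b', hb', heq⟩
        · exact absurd (hAtts hcb).1 hη
        · exact absurd ((Prod.mk.injEq _ _ _ _ ▸ heq).2 ▸ hb') hb.2
end

section
/- Let F = (Args, Atts) be an AAF, η ∉ Args, and B ⊆ Args. Let F↾(Args\B) = (Args \ B, Atts ∩ ((Args\B) × (Args\B))) be the induced sub-framework obtained by deleting the arguments in B, and let F_{η,B} = (Args ∪ {η}, Atts ∪ {(η,b) : b ∈ B}), in which η attacks exactly the arguments of B and is attacked by no argument. Then for every S ⊆ Args \ B: S is complete in F↾(Args\B) if and only if S ∪ {η} is complete in F_{η,B}. -/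
variable {α : Type*}

def complete (Args : Set α) (Atts : Set (α × α)) (S : Set α) : Prop :=
  admissible Args Atts S ∧ ∀ a ∈ Args, acceptable Args Atts S a → a ∈ S

theorem stmt_6 (Args : Set α) (Atts : Set (α × α))
    (hAtts : Atts ⊆ Args ×ˢ Args) (η : α) (hη : η ∉ Args)
    (B : Set α) (hB : B ⊆ Args)
    (S : Set α) (hS : S ⊆ Args \ B) :
    complete (Args \ B) (Atts ∩ ((Args \ B) ×ˢ (Args \ B))) S ↔
      complete (Args ∪ {η}) (Atts ∪ {q : α × α | ∃ b ∈ B, q = (η, b)}) (S ∪ {η}) := by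
  set R : Set (α × α) := Atts ∩ ((Args \ B) ×ˢ (Args \ B)) with hR
  set R' : Set (α × α) := Atts ∪ {q : α × α | ∃ b ∈ B, q = (η, b)} with hR'
  -- basic facts
  have hηfst : ∀ x, (η, x) ∉ Atts := fun x h => hη (hAtts h).1
  have hηsnd : ∀ x, (x, η) ∉ R' := by
    rintro x (h | ⟨b, hb, heq⟩)
    · exact hη (hAtts h).2
    · exact hη (hB (by injection heq with h1 h2; exact h2 ▸ hb))
  -- an attack in R' on an element of Args \ B comes from Atts
  have hattR' : ∀ a ∈ Args \ B, ∀ b, (b, a) ∈ R' → (b, a) ∈ Atts := by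
    rintro a ha b (h | ⟨c, hc, heq⟩)
    · exact h
    · injection heq with h1 h2; exact absurd (h2 ▸ hc) ha.2
  -- acceptability transfer: restricted → big, for a ∈ Args \ B
  have acc_fwd : ∀ a ∈ Args \ B, acceptable (Args \ B) R S a →
      acceptable (Args ∪ {η}) R' (S ∪ {η}) a := by
    intro a ha hacc b hb hba
    have hba' : (b, a) ∈ Atts := hattR' a ha b hba
    have hbArgs : b ∈ Args := (hAtts hba').1
    by_cases hbB : b ∈ B
    · exact ⟨η, Or.inr rfl, Or.inr ⟨b, hbB, rfl⟩⟩
    · obtain ⟨c, hc, hcb⟩ := hacc b ⟨hbArgs, hbB⟩ ⟨hba', ⟨hbArgs, hbB⟩, ha⟩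
      exact ⟨c, Or.inl hc, Or.inl hcb.1⟩
  -- acceptability transfer: big → restricted, for a ∈ Args \ B
  have acc_bwd : ∀ a ∈ Args \ B, acceptable (Args ∪ {η}) R' (S ∪ {η}) a →
      acceptable (Args \ B) R S a := by
    intro a ha hacc b hb hba
    obtain ⟨c, hc, hcb⟩ := hacc b (Or.inl hb.1) (Or.inl hba.1)
    rcases hc with hc | hc
    · have hcb' : (c, b) ∈ Atts := by
        rcases hcb with h | ⟨d, hd, heq⟩
        · exact h
        · injection heq with h1 h2; exact absurd (h2 ▸ hd) hb.2
      exact ⟨c, hc, ⟨hcb', hS hc, hb⟩⟩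
    · exfalso
      have : (c, b) ∈ Atts := by
        rcases hcb with h | ⟨d, hd, heq⟩
        · exact h
        · injection heq with h1 h2; exact absurd (h2 ▸ hd) hb.2
      exact hη (hc ▸ (hAtts this).1)
  constructor
  · rintro ⟨⟨hsub, hcf, hadm⟩, hcomp⟩
    refine ⟨⟨?_, ?_, ?_⟩, ?_⟩
    · rintro x (hx | hx)
      · exact Or.inl (hS hx).1
      · exact Or.inr hx
    · rintro x (hx | hx) y (hy | hy)
      · rintro (h | ⟨b, hb, heq⟩)
        · exact hcf x hx y hy ⟨h, hS hx, hS hy⟩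
        · injection heq with h1 h2; exact hη (h1 ▸ (hS hx).1)
      · exact fun h => hηsnd x (hy ▸ h)
      · rintro (h | ⟨b, hb, heq⟩)
        · exact hηfst y (hx ▸ h)
        · injection heq with h1 h2; exact (hS hy).2 (h2 ▸ hb)
      · exact fun h => hηsnd x (hy ▸ h)
    · rintro a (ha | ha)
      · exact acc_fwd a (hS ha) (hadm a ha)
      · subst ha
        intro b hb hba
        exact absurd hba (hηsnd b)
    · rintro a (ha | ha) hacc
      · by_cases haB : a ∈ B
        · exfalso
          obtain ⟨c, hc, hcη⟩ := hacc η (Or.inr rfl) (Or.inr ⟨a, haB, rfl⟩)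
          exact hηsnd c hcη
        · exact Or.inl (hcomp a ⟨ha, haB⟩ (acc_bwd a ⟨ha, haB⟩ hacc))
      · exact Or.inr ha
  · rintro ⟨⟨hsub, hcf, hadm⟩, hcomp⟩
    refine ⟨⟨hS, ?_, ?_⟩, ?_⟩
    · intro x hx y hy h
      exact hcf x (Or.inl hx) y (Or.inl hy) (Or.inl h.1)
    · intro a ha
      exact acc_bwd a (hS ha) (hadm a (Or.inl ha))
    · intro a ha hacc
      have := hcomp a (Or.inl ha.1) (acc_fwd a ha hacc)
      rcases this with h | h
      · exact h
      · exact absurd (h ▸ ha.1) hη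
end

section
/- Let F = (Args, Atts) be an AAF, η ∉ Args, and B ⊆ Args. Let F↾(Args\B) = (Args \ B, Atts ∩ ((Args\B) × (Args\B))) be the induced sub-framework obtained by deleting the arguments in B, and let F_{η,B} = (Args ∪ {η}, Atts ∪ {(η,b) : b ∈ B}), in which η attacks exactly the arguments of B and is attacked by no argument. Then for every S ⊆ Args \ B: S is stable in F↾(Args\B) if and only if S ∪ {η} is stable in F_{η,B}. -/
/-! In `F_{η,B}` the argument η attacks exactly `B` and is attacked by nothing, and η has no
attacks to or from `S`. So the arguments of `B` are defeated by η alone, and every other argument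
outside `S ∪ {η}` must be defeated by an attack of `F` from `S`, which is an attack of
`F↾(Args \ B)`. -/

variable {α : Type*}

def stable (Args : Set α) (Atts : Set (α × α)) (S : Set α) : Prop :=
  S ⊆ Args ∧ conflictFree Atts S ∧ ∀ a ∈ Args \ S, ∃ b ∈ S, (b, a) ∈ Atts

section Restriction

variable {Atts : Set (α × α)} {S T : Set α}

theorem conflictFree_inter_prod_iff (hS : S ⊆ T) :
    conflictFree (Atts ∩ T ×ˢ T) S ↔ conflictFree Atts S :=
  ⟨fun h a ha b hb hab => h a ha b hb ⟨hab, hS ha, hS hb⟩,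
    fun h a ha b hb hab => h a ha b hb hab.1⟩

theorem stable_inter_prod_iff (hS : S ⊆ T) :
    stable T (Atts ∩ T ×ˢ T) S ↔
      conflictFree Atts S ∧ ∀ a ∈ T \ S, ∃ b ∈ S, (b, a) ∈ Atts := by
  rw [stable, conflictFree_inter_prod_iff hS, and_iff_right hS]
  refine and_congr_right fun _ => forall₂_congr fun a ha =>
    exists_congr fun b => and_congr_right fun hb => ?_
  exact ⟨fun h => h.1, fun h => ⟨h, hS hb, ha.1⟩⟩

end Restriction

section Adjoin

variable {Args B S : Set α} {Atts : Set (α × α)} {η : α}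

theorem mem_attacksFrom_iff {x y : α} :
    (x, y) ∈ {q : α × α | ∃ b ∈ B, q = (η, b)} ↔ x = η ∧ y ∈ B := by
  simp [and_comm]

theorem conflictFree_union_singleton_iff (hAtts : Atts ⊆ Args ×ˢ Args) (hη : η ∉ Args)
    (hηB : η ∉ B) (hS : S ⊆ Args \ B) :
    conflictFree (Atts ∪ {q : α × α | ∃ b ∈ B, q = (η, b)}) (S ∪ {η}) ↔ conflictFree Atts S := by
  refine ⟨fun h a ha b hb hab => h a (.inl ha) b (.inl hb) (.inl hab), fun h => ?_⟩
  rintro a ha b hb (hab | hab)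
  · have hArgs := hAtts hab
    have ha' : a ∈ S := ha.resolve_right fun h => hη (h ▸ hArgs.1)
    have hb' : b ∈ S := hb.resolve_right fun h => hη (h ▸ hArgs.2)
    exact h a ha' b hb' hab
  · obtain ⟨-, hbB⟩ := mem_attacksFrom_iff.1 hab
    rcases hb with hb | rfl
    · exact (hS hb).2 hbB
    · exact hηB hbB

theorem exists_attacker_union_singleton_iff (hAtts : Atts ⊆ Args ×ˢ Args) (hη : η ∉ Args)
    (hS : S ⊆ Args) {a : α} :
    (∃ b ∈ S ∪ {η}, (b, a) ∈ Atts ∪ {q : α × α | ∃ b ∈ B, q = (η, b)}) ↔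
      a ∈ B ∨ ∃ b ∈ S, (b, a) ∈ Atts := by
  have hηS : η ∉ S := fun h => hη (hS h)
  have hηAtts : (η, a) ∉ Atts := fun h => hη (hAtts h).1
  simp only [Set.union_singleton, Set.exists_mem_insert, Set.mem_union, mem_attacksFrom_iff]
  grind

theorem stable_union_singleton_iff (hAtts : Atts ⊆ Args ×ˢ Args) (hη : η ∉ Args)
    (hηB : η ∉ B) (hS : S ⊆ Args \ B) :
    stable (Args ∪ {η}) (Atts ∪ {q : α × α | ∃ b ∈ B, q = (η, b)}) (S ∪ {η}) ↔
      conflictFree Atts S ∧ ∀ a ∈ Args \ S, a ∈ B ∨ ∃ b ∈ S, (b, a) ∈ Atts := by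
  have hS' : S ⊆ Args := hS.trans Set.sdiff_subset
  have hdiff : (Args ∪ {η}) \ (S ∪ {η}) = Args \ S := by
    ext x
    simp only [Set.mem_sdiff, Set.mem_union, Set.mem_singleton_iff]
    grind
  rw [stable, conflictFree_union_singleton_iff hAtts hη hηB hS, hdiff,
    and_iff_right (Set.union_subset_union_left _ hS')]
  exact and_congr_right fun _ => forall₂_congr fun a _ =>
    exists_attacker_union_singleton_iff hAtts hη hS'

end Adjoin

theorem stmt_9 (Args : Set α) (Atts : Set (α × α))
    (hAtts : Atts ⊆ Args ×ˢ Args) (η : α) (hη : η ∉ Args)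
    (B : Set α) (hB : B ⊆ Args)
    (S : Set α) (hS : S ⊆ Args \ B) :
    stable (Args \ B) (Atts ∩ ((Args \ B) ×ˢ (Args \ B))) S ↔
      stable (Args ∪ {η}) (Atts ∪ {q : α × α | ∃ b ∈ B, q = (η, b)}) (S ∪ {η}) := by
  rw [stable_inter_prod_iff hS, stable_union_singleton_iff hAtts hη (fun h => hη (hB h)) hS]
  refine and_congr_right fun _ => forall_congr' fun a => ?_
  by_cases haB : a ∈ B <;> simp [haB]
end

section
/- Let (Args, Atts) be an AAF with Args finite, let A ⊆ Args be the probabilistic arguments with probabilities p : Args → ℝ satisfying 0 < p(a) ≤ 1 for all a ∈ A, and let η ∉ Args. For a possible world U with Args \ A ⊆ U ⊆ Args, let P(U) = ∏_{a ∈ U ∩ A} p(a) · ∏_{a ∈ A \ U} (1 − p(a)) and let F_U = (U, Atts ∩ (U × U)). For a possible world T ⊆ A of the transformed framework, let P'(T) = ∏_{a ∈ T} (1 − p(a)) · ∏_{a ∈ A \ T} p(a) and let F'_T = (Args ∪ {η}, Atts ∪ {(η,a) : a ∈ T}). Then for every S ⊆ Args: ∑_{U : Args\A ⊆ U ⊆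 Args, S ⊆ U, S admissible in F_U} P(U) = ∑_{T ⊆ A : S ∪ {η} admissible in F'_T} P'(T); that is, the probability that S is an admissible set in the original probabilistic AAF equals the probability that S ∪ {η} is an admissible set in the transformed probabilistic AAF. -/
variable {α : Type*}

lemma key_14 [DecidableEq α] (Args A : Finset α) (hA : A ⊆ Args)
    (Atts : Set (α × α)) (hAtts : Atts ⊆ (↑Args : Set α) ×ˢ (↑Args : Set α))
    (η : α) (hη : η ∉ Args)
    (S : Set α) (hS : S ⊆ (↑Args : Set α))
    (U : Finset α) (hU : U ⊆ Args) (hUA : Args \ A ⊆ U) :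
    (S ⊆ (↑U : Set α) ∧
      admissible (↑U : Set α) (Atts ∩ ((↑U : Set α) ×ˢ (↑U : Set α))) S) ↔
    admissible ((↑Args : Set α) ∪ {η})
      (Atts ∪ {q : α × α | ∃ a ∈ A \ U, q = (η, a)}) (S ∪ {η}) := by
  constructor
  · rintro ⟨hSU, _, hcf, hacc⟩
    refine ⟨?_, ?_, ?_⟩
    · rintro x (hx | hx)
      · exact Or.inl (hS hx)
      · exact Or.inr hx
    · rintro a (ha | rfl) b (hb | rfl) hab
      · rcases hab with hab | ⟨c, hc, hq⟩
        · have haU : a ∈ (↑U : Set α) := hSU ha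
          have hbU : b ∈ (↑U : Set α) := hSU hb
          exact hcf a ha b hb ⟨hab, haU, hbU⟩
        · have haη := (Prod.mk.inj hq).1
          rw [haη] at ha
          exact hη (hS ha)
      · rcases hab with hab | ⟨c, hc, hq⟩
        · exact hη ((hAtts hab).2)
        · have haη := (Prod.mk.inj hq).1
          rw [haη] at ha
          exact hη (hS ha)
      · rcases hab with hab | ⟨c, hc, hq⟩
        · exact hη ((hAtts hab).1)
        · have hbc := (Prod.mk.inj hq).2
          subst hbc
          have := (Finset.mem_sdiff.mp hc).2
          exact this (hSU hb)
      · rcases hab with hab | ⟨c, hc, hq⟩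
        · exact hη ((hAtts hab).1)
        · have hcη := (Prod.mk.inj hq).2
          rw [← hcη] at hc
          exact hη (hA (Finset.mem_sdiff.mp hc).1)
    · rintro a (ha | rfl)
      · rintro b hb (hba | ⟨c, hc, hq⟩)
        · by_cases hbU : b ∈ U
          · obtain ⟨c, hc, hcb, _⟩ := hacc a ha b hbU ⟨hba, hbU, hSU ha⟩
            exact ⟨c, Or.inl hc, Or.inl hcb⟩
          · have hbA : b ∈ A := by
              by_contra hbA
              exact hbU (hUA (Finset.mem_sdiff.mpr ⟨by exact_mod_cast (hAtts hba).1, hbA⟩))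
            exact ⟨η, Or.inr rfl, Or.inr ⟨b, Finset.mem_sdiff.mpr ⟨hbA, hbU⟩, rfl⟩⟩
        · have hb' : b = η := congrArg Prod.fst hq
          have ha' : a = c := congrArg Prod.snd hq
          subst ha'
          exact absurd (hSU ha) (Finset.mem_sdiff.mp hc).2
      · rintro b hb (hba | ⟨c, hc, hq⟩)
        · exact absurd (hAtts hba).2 hη
        · have hcη := (Prod.mk.inj hq).2
          rw [← hcη] at hc
          exact absurd (hA (Finset.mem_sdiff.mp hc).1) hη
  · rintro ⟨hsub, hcf', hacc'⟩
    have hSU : S ⊆ (↑U : Set α) := by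
      intro x hx
      by_contra hxU
      have hxA : x ∈ A := by
        by_contra hxA
        exact hxU (hUA (Finset.mem_sdiff.mpr ⟨by exact_mod_cast hS hx, hxA⟩))
      exact hcf' η (Or.inr rfl) x (Or.inl hx)
        (Or.inr ⟨x, Finset.mem_sdiff.mpr ⟨hxA, hxU⟩, rfl⟩)
    refine ⟨hSU, hSU, ?_, ?_⟩
    · intro a ha b hb hab
      exact hcf' a (Or.inl ha) b (Or.inl hb) (Or.inl hab.1)
    · intro a ha b hbU hba
      obtain ⟨c, hc, hcb⟩ := hacc' a (Or.inl ha) b (Or.inl (hU hbU)) (Or.inl hba.1)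
      rcases hc with hc | rfl
      · rcases hcb with hcb | ⟨d, hd, hq⟩
        · exact ⟨c, hc, hcb, hSU hc, hbU⟩
        · have hcη := (Prod.mk.inj hq).1
          rw [hcη] at hc
          exact absurd (hS hc) hη
      · rcases hcb with hcb | ⟨d, hd, hq⟩
        · exact absurd (hAtts hcb).1 hη
        · have hbd := (Prod.mk.inj hq).2
          rw [← hbd] at hd
          exact absurd hbU (Finset.mem_sdiff.mp hd).2

open Classical in
theorem stmt_14 [DecidableEq α] (Args A : Finset α) (hA : A ⊆ Args)
    (Atts : Set (α × α)) (hAtts : Atts ⊆ (↑Args : Set α) ×ˢ (↑Args : Set α))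
    (p : α → ℝ) (hp : ∀ a ∈ A, 0 < p a ∧ p a ≤ 1)
    (η : α) (hη : η ∉ Args)
    (S : Set α) (hS : S ⊆ (↑Args : Set α)) :
    ∑ U ∈ Args.powerset.filter (fun U => Args \ A ⊆ U ∧ S ⊆ (↑U : Set α) ∧
        admissible (↑U : Set α) (Atts ∩ ((↑U : Set α) ×ˢ (↑U : Set α))) S),
      ((∏ a ∈ U ∩ A, p a) * ∏ a ∈ A \ U, (1 - p a)) =
    ∑ T ∈ A.powerset.filter (fun T =>
        admissible ((↑Args : Set α) ∪ {η})
          (Atts ∪ {q : α × α | ∃ a ∈ T, q = (η, a)}) (S ∪ {η})),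
      ((∏ a ∈ T, (1 - p a)) * ∏ a ∈ A \ T, p a) := by
  refine Finset.sum_bij' (fun U _ => A \ U) (fun T _ => Args \ T) ?_ ?_ ?_ ?_ ?_
  · intro U hU
    rw [Finset.mem_filter, Finset.mem_powerset] at hU ⊢
    obtain ⟨hUsub, hUA, hrest⟩ := hU
    exact ⟨Finset.sdiff_subset, (key_14 Args A hA Atts hAtts η hη S hS U hUsub hUA).mp hrest⟩
  · intro T hT
    rw [Finset.mem_filter, Finset.mem_powerset] at hT ⊢
    obtain ⟨hTA, hadm⟩ := hT
    have h1 : Args \ A ⊆ Args \ T := Finset.sdiff_subset_sdiff (le_refl _) hTA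
    have h2 : A \ (Args \ T) = T := by
      ext x
      simp only [Finset.mem_sdiff, not_and, not_not]
      constructor
      · rintro ⟨hxA, h⟩
        exact h (hA hxA)
      · intro hx
        exact ⟨hTA hx, fun _ => hx⟩
    refine ⟨Finset.sdiff_subset, h1, ?_⟩
    have := (key_14 Args A hA Atts hAtts η hη S hS (Args \ T) Finset.sdiff_subset h1).mpr
    rw [h2] at this
    exact this hadm
  · intro U hU
    rw [Finset.mem_filter, Finset.mem_powerset] at hU
    ext x
    simp only [Finset.mem_sdiff, not_and, not_not]
    constructor
    · rintro ⟨hxArgs, h⟩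
      by_cases hxA : x ∈ A
      · exact h hxA
      · exact hU.2.1 (Finset.mem_sdiff.mpr ⟨hxArgs, hxA⟩)
    · intro hxU
      exact ⟨hU.1 hxU, fun _ => hxU⟩
  · intro T hT
    rw [Finset.mem_filter, Finset.mem_powerset] at hT
    ext x
    simp only [Finset.mem_sdiff, not_and, not_not]
    constructor
    · rintro ⟨hxA, h⟩
      exact h (hA hxA)
    · intro hx
      exact ⟨hT.1 hx, fun _ => hx⟩
  · intro U hU
    rw [Finset.sdiff_sdiff_self_left, Finset.inter_comm U A, mul_comm]
end

section
/- Let (Args, Atts) be an AAF with Args finite, let A ⊆ Args be the probabilistic arguments with probabilities p : Args → ℝ satisfying 0 < p(a) ≤ 1 for all a ∈ A, and let η ∉ Args. For a possible world U with Args \ A ⊆ U ⊆ Args, let P(U) = ∏_{a ∈ U ∩ A} p(a) · ∏_{a ∈ A \ U} (1 − p(a)) and let F_U = (U, Atts ∩ (U × U)). For T ⊆ A, let P'(T) = ∏_{a ∈ T} (1 − p(a)) · ∏_{a ∈ A \ T} p(a) and let F'_T = (Args ∪ {η}, Atts ∪ {(η,a) : a ∈ T}). Then for every S ⊆ Args: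 ∑_{U : Args\A ⊆ U ⊆ Args, S ⊆ U, S complete in F_U} P(U) = ∑_{T ⊆ A : S ∪ {η} complete in F'_T} P'(T). -/
variable {α : Type*}

lemma key_equiv (Args : Set α) (Atts : Set (α × α))
    (hAtts : Atts ⊆ Args ×ˢ Args) (η : α) (hη : η ∉ Args)
    (S : Set α) (hS : S ⊆ Args) (T : Set α) (hT : T ⊆ Args) :
    complete (Args ∪ {η}) (Atts ∪ {q : α × α | ∃ a ∈ T, q = (η, a)}) (S ∪ {η}) ↔
      (S ⊆ Args \ T ∧
        complete (Args \ T) (Atts ∩ ((Args \ T) ×ˢ (Args \ T))) S) := by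
  set Atts' := Atts ∪ {q : α × α | ∃ a ∈ T, q = (η, a)} with hA'
  set U := Args \ T with hU
  have hηT : η ∉ T := fun h => hη (hT h)
  have hnoeta : ∀ x, (x, η) ∉ Atts' := by
    rintro x (h | ⟨a, ha, hq⟩)
    · exact hη (hAtts h).2
    · exact hηT (by injection hq with h1 h2; exact h2 ▸ ha)
  have hetaAtt : ∀ b, (η, b) ∈ Atts' ↔ b ∈ T := by
    intro b
    constructor
    · rintro (h | ⟨a, ha, hq⟩)
      · exact absurd (hAtts h).1 hη
      · injection hq with h1 h2; exact h2 ▸ ha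
    · intro hb; exact Or.inr ⟨b, hb, rfl⟩
  have hmem : ∀ c ∈ Args, ∀ b, (c, b) ∈ Atts' → (c, b) ∈ Atts := by
    rintro c hc b (h | ⟨a, ha, hq⟩)
    · exact h
    · injection hq with h1 h2; exact absurd (h1 ▸ hc) hη
  constructor
  · rintro ⟨⟨hsub, hcf, hacc⟩, hfix⟩
    have hST : ∀ a ∈ S, a ∉ T := by
      intro a haS haT
      exact hcf η (Or.inr rfl) a (Or.inl haS) ((hetaAtt a).2 haT)
    have hSU : S ⊆ U := fun a ha => ⟨hS ha, hST a ha⟩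
    refine ⟨hSU, ⟨hSU, ?_, ?_⟩, ?_⟩
    · intro a ha b hb hab
      exact hcf a (Or.inl ha) b (Or.inl hb) (Or.inl hab.1)
    · intro a ha b hb hab
      obtain ⟨c, hc, hcb⟩ := hacc a (Or.inl ha) b (Or.inl (hb.1)) (Or.inl hab.1)
      rcases hc with hc | hc
      · exact ⟨c, hc, hmem c (hS hc) b hcb, hSU hc, hb⟩
      · subst hc
        exact absurd ((hetaAtt b).1 hcb) hb.2
    · intro a ha hacc'
      have : a ∈ S ∪ {η} := by
        refine hfix a (Or.inl ha.1) ?_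
        intro b hb hba
        rcases hb with hb | hb
        · have hba' := hmem b hb a hba
          by_cases hbT : b ∈ T
          · exact ⟨η, Or.inr rfl, (hetaAtt b).2 hbT⟩
          · obtain ⟨c, hc, hcb⟩ := hacc' b ⟨hb, hbT⟩ ⟨hba', ⟨hb, hbT⟩, ha⟩
            exact ⟨c, Or.inl hc, Or.inl hcb.1⟩
        · exfalso
          rcases hba with hba | ⟨a', ha', hq⟩
          · exact hη (hb ▸ (hAtts hba).1)
          · injection hq with h1 h2; exact ha.2 (h2 ▸ ha')
      rcases this with h | h
      · exact h
      · exact absurd (h ▸ ha.1) hη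
  · rintro ⟨hSU, ⟨⟨_, hcf, hacc⟩, hfix⟩⟩
    refine ⟨⟨?_, ?_, ?_⟩, ?_⟩
    · rintro a (ha | ha)
      · exact Or.inl (hS ha)
      · exact Or.inr ha
    · rintro a ha b hb hab
      rcases hab with hab | ⟨a', ha', hq⟩
      · rcases ha with ha | ha
        · rcases hb with hb | hb
          · exact hcf a ha b hb ⟨hab, hSU ha, hSU hb⟩
          · exact hη (hb ▸ (hAtts hab).2)
        · exact hη (ha ▸ (hAtts hab).1)
      · injection hq with h1 h2
        rcases hb with hb | hb
        · exact (hSU (h2 ▸ hb)).2 ha'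
        · have hb' : b = η := hb
          exact hηT (by rw [← h2, hb'] at ha'; exact ha')
    · rintro a (ha | ha)
      · intro b hb hba
        rcases hba with hba | ⟨a', ha', hq⟩
        · have hbA : b ∈ Args := (hAtts hba).1
          by_cases hbT : b ∈ T
          · exact ⟨η, Or.inr rfl, (hetaAtt b).2 hbT⟩
          · obtain ⟨c, hc, hcb⟩ := hacc a ha b ⟨hbA, hbT⟩ ⟨hba, ⟨hbA, hbT⟩, hSU ha⟩
            exact ⟨c, Or.inl hc, Or.inl hcb.1⟩
        · injection hq with h1 h2
          exact absurd (h2 ▸ ha') (hSU ha).2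
      · intro b hb hba
        exact absurd (ha ▸ hba) (hnoeta b)
    · rintro a (ha | ha) hacc'
      · by_cases haT : a ∈ T
        · exfalso
          obtain ⟨c, hc, hcb⟩ := hacc' η (Or.inr rfl) ((hetaAtt a).2 haT)
          exact hnoeta c hcb
        · left
          refine hfix a ⟨ha, haT⟩ ?_
          intro b hb hba
          obtain ⟨c, hc, hcb⟩ := hacc' b (Or.inl hb.1) (Or.inl hba.1)
          rcases hc with hc | hc
          · exact ⟨c, hc, hmem c (hS hc) b hcb, hSU hc, hb⟩
          · subst hc
            exact absurd ((hetaAtt b).1 hcb) hb.2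
      · exact Or.inr ha

open Classical in
theorem stmt_15 [DecidableEq α] (Args A : Finset α) (hA : A ⊆ Args)
    (Atts : Set (α × α)) (hAtts : Atts ⊆ (↑Args : Set α) ×ˢ (↑Args : Set α))
    (p : α → ℝ) (hp : ∀ a ∈ A, 0 < p a ∧ p a ≤ 1)
    (η : α) (hη : η ∉ Args)
    (S : Set α) (hS : S ⊆ (↑Args : Set α)) :
    ∑ U ∈ Args.powerset.filter (fun U => Args \ A ⊆ U ∧ S ⊆ (↑U : Set α) ∧
        complete (↑U : Set α) (Atts ∩ ((↑U : Set α) ×ˢ (↑U : Set α))) S),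
      ((∏ a ∈ U ∩ A, p a) * ∏ a ∈ A \ U, (1 - p a)) =
    ∑ T ∈ A.powerset.filter (fun T =>
        complete ((↑Args : Set α) ∪ {η})
          (Atts ∪ {q : α × α | ∃ a ∈ T, q = (η, a)}) (S ∪ {η})),
      ((∏ a ∈ T, (1 - p a)) * ∏ a ∈ A \ T, p a) := by
  have hη' : η ∉ (↑Args : Set α) := hη
  have key : ∀ T : Finset α, T ⊆ A →
      (complete ((↑Args : Set α) ∪ {η})
        (Atts ∪ {q : α × α | ∃ a ∈ T, q = (η, a)}) (S ∪ {η}) ↔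
      (S ⊆ (↑(Args \ T) : Set α) ∧
        complete (↑(Args \ T) : Set α)
          (Atts ∩ ((↑(Args \ T) : Set α) ×ˢ (↑(Args \ T) : Set α))) S)) := by
    intro T hT
    have h1 : {q : α × α | ∃ a ∈ T, q = (η, a)} =
        {q : α × α | ∃ a ∈ (↑T : Set α), q = (η, a)} := by
      ext q; simp
    have h2 : (↑(Args \ T) : Set α) = (↑Args : Set α) \ ↑T := by
      simp [Finset.coe_sdiff]
    rw [h1, h2]
    exact key_equiv (↑Args) Atts hAtts η hη' S hS (↑T)
      (fun a ha => hA (hT ha))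
  have hUT : ∀ U : Finset α, U ⊆ Args → Args \ A ⊆ U → Args \ (A \ U) = U := by
    intro U h1 h2
    ext a
    simp only [Finset.mem_sdiff]
    constructor
    · rintro ⟨ha, hn⟩
      by_cases haA : a ∈ A
      · by_contra haU; exact hn ⟨haA, haU⟩
      · exact h2 (Finset.mem_sdiff.mpr ⟨ha, haA⟩)
    · intro ha
      exact ⟨h1 ha, fun h => h.2 ha⟩
  have hTU : ∀ T : Finset α, T ⊆ A → A \ (Args \ T) = T := by
    intro T h1
    ext a
    simp only [Finset.mem_sdiff, not_and, not_not]
    constructor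
    · rintro ⟨ha, hn⟩
      exact hn (hA ha)
    · intro ha
      exact ⟨h1 ha, fun _ => ha⟩
  refine Finset.sum_bij' (fun U _ => A \ U) (fun T _ => Args \ T) ?_ ?_ ?_ ?_ ?_
  · intro U hU
    simp only [Finset.mem_filter, Finset.mem_powerset] at hU ⊢
    obtain ⟨hUargs, hAU, hSU, hcomp⟩ := hU
    refine ⟨Finset.sdiff_subset, ?_⟩
    rw [key (A \ U) Finset.sdiff_subset, hUT U hUargs hAU]
    exact ⟨hSU, hcomp⟩
  · intro T hT
    simp only [Finset.mem_filter, Finset.mem_powerset] at hT ⊢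
    obtain ⟨hTA, hcomp⟩ := hT
    rw [key T hTA] at hcomp
    exact ⟨Finset.sdiff_subset, Finset.sdiff_subset_sdiff (Finset.Subset.refl Args) hTA, hcomp.1, hcomp.2⟩
  · intro U hU
    simp only [Finset.mem_filter, Finset.mem_powerset] at hU
    exact hUT U hU.1 hU.2.1
  · intro T hT
    simp only [Finset.mem_filter, Finset.mem_powerset] at hT
    exact hTU T hT.1
  · intro U hU
    simp only [Finset.mem_filter, Finset.mem_powerset] at hU
    have : A \ (A \ U) = U ∩ A := by
      rw [Finset.sdiff_sdiff_self_left, Finset.inter_comm]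
    rw [this, mul_comm]
end

section
/- Let (Args, Atts) be an AAF with Args finite, let A ⊆ Args be the probabilistic arguments with probabilities p : Args → ℝ satisfying 0 < p(a) ≤ 1 for all a ∈ A, and let η ∉ Args. For a possible world U with Args \ A ⊆ U ⊆ Args, let P(U) = ∏_{a ∈ U ∩ A} p(a) · ∏_{a ∈ A \ U} (1 − p(a)) and let F_U = (U, Atts ∩ (U × U)). For T ⊆ A, let P'(T) = ∏_{a ∈ T} (1 − p(a)) · ∏_{a ∈ A \ T} p(a) and let F'_T = (Args ∪ {η}, Atts ∪ {(η,a) : a ∈ T}). Then for every S ⊆ Args: ∑_{U : Args\A ⊆ U ⊆ Args, S ⊆ U, S preferred in F_U} P(U) = ∑_{T ⊆ A : S ∪ {η} preferred in F'_T} P'(T). -/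
variable {α : Type*}

def preferred (Args : Set α) (Atts : Set (α × α)) (S : Set α) : Prop :=
  admissible Args Atts S ∧ ∀ T : Set α, admissible Args Atts T → S ⊆ T → T = S

lemma aux_iff [DecidableEq α] (Args A : Finset α) (hA : A ⊆ Args)
    (Atts : Set (α × α)) (hAtts : Atts ⊆ (↑Args : Set α) ×ˢ (↑Args : Set α))
    (η : α) (hη : η ∉ Args)
    (S : Set α) (hS : S ⊆ (↑Args : Set α))
    (U : Finset α) (hU : U ⊆ Args) (hUA : Args \ A ⊆ U) :
    (S ⊆ (↑U : Set α) ∧ preferred (↑U : Set α) (Atts ∩ ((↑U : Set α) ×ˢ (↑U : Set α))) S) ↔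
    preferred ((↑Args : Set α) ∪ {η})
      (Atts ∪ {q : α × α | ∃ a ∈ A \ U, q = (η, a)}) (S ∪ {η}) := by
  have hηS : η ∉ S := fun h => hη (hS h)
  -- any b ∈ Args with b ∉ U is in A \ U
  have hcompl : ∀ b : α, b ∈ Args → b ∉ U → b ∈ A \ U := by
    intro b hb hbU
    by_cases hbA : b ∈ A
    · exact Finset.mem_sdiff.2 ⟨hbA, hbU⟩
    · exact absurd (hUA (Finset.mem_sdiff.2 ⟨hb, hbA⟩)) hbU
  constructor
  · rintro ⟨hSU, ⟨⟨hSsub, hcf, hacc⟩, hmax⟩⟩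
    refine ⟨⟨?_, ?_, ?_⟩, ?_⟩
    · rintro x (hx | hx)
      · exact Or.inl (hS hx)
      · exact Or.inr hx
    · rintro a ha b hb (hab | hab)
      · have hab' := hAtts hab
        have haA : a ∈ (↑Args : Set α) := hab'.1
        have hbA : b ∈ (↑Args : Set α) := hab'.2
        have haS : a ∈ S := ha.resolve_right
          (fun h => hη (Finset.mem_coe.1 (Set.mem_singleton_iff.1 h ▸ haA)))
        have hbS : b ∈ S := hb.resolve_right
          (fun h => hη (Finset.mem_coe.1 (Set.mem_singleton_iff.1 h ▸ hbA)))
        exact hcf a haS b hbS ⟨hab, hSU haS, hSU hbS⟩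
      · obtain ⟨c, hc, heq⟩ := hab
        have hbc : b = c := congrArg Prod.snd heq
        have hcU : c ∉ U := (Finset.mem_sdiff.1 hc).2
        have hbS : b ∈ S := hb.resolve_right (fun h => by
          apply hη
          rw [← Set.mem_singleton_iff.1 h, hbc]
          exact hA (Finset.mem_sdiff.1 hc).1)
        exact hcU (hbc ▸ hSU hbS)
    · rintro x (hx | hx)
      · rintro b hb (hatt | hatt)
        · have hbArgs : b ∈ Args := (hAtts hatt).1
          by_cases hbU : b ∈ U
          · obtain ⟨c, hcS, hcb⟩ := hacc x hx b hbU ⟨hatt, hbU, hSU hx⟩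
            exact ⟨c, Or.inl hcS, Or.inl hcb.1⟩
          · exact ⟨η, Or.inr rfl, Or.inr ⟨b, hcompl b hbArgs hbU, rfl⟩⟩
        · obtain ⟨c, hc, heq⟩ := hatt
          have hxc : x = c := congrArg Prod.snd heq
          exact absurd (hxc ▸ hSU hx) (Finset.mem_sdiff.1 hc).2
      · rcases hx with rfl
        rintro b hb (hatt | hatt)
        · exact absurd (hAtts hatt).2 (by simpa using hη)
        · obtain ⟨c, hc, heq⟩ := hatt
          have : x = c := congrArg Prod.snd heq
          exact absurd (this ▸ hA (Finset.mem_sdiff.1 hc).1) hη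
    · intro T' hT' hsub
      obtain ⟨hT'sub, hT'cf, hT'acc⟩ := hT'
      have hηT' : η ∈ T' := hsub (Or.inr rfl)
      -- T' \ {η} ⊆ U
      have hT'U : ∀ x ∈ T', x ≠ η → x ∈ U := by
        intro x hx hxη
        have hxArgs : x ∈ Args := by
          rcases hT'sub hx with h | h
          · exact h
          · exact absurd h hxη
        by_contra hxU
        exact hT'cf η hηT' x hx (Or.inr ⟨x, hcompl x hxArgs hxU, rfl⟩)
      have hadm : admissible (↑U : Set α) (Atts ∩ ((↑U : Set α) ×ˢ (↑U : Set α)))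
          (T' \ {η}) := by
        refine ⟨?_, ?_, ?_⟩
        · rintro x ⟨hx, hxη⟩
          exact hT'U x hx hxη
        · rintro a ⟨ha, _⟩ b ⟨hb, _⟩ hab
          exact hT'cf a ha b hb (Or.inl hab.1)
        · rintro x ⟨hx, hxη⟩ b hb hatt
          obtain ⟨c, hcT', hcatt⟩ := hT'acc x hx b (Or.inl (Finset.mem_coe.2 (hU hb))) (Or.inl hatt.1)
          rcases hcatt with hcb | hcb
          · have hcArgs : c ∈ (↑Args : Set α) := (hAtts hcb).1
            have hcη : c ≠ η := fun h => hη (by simpa [h] using hcArgs)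
            refine ⟨c, ⟨hcT', hcη⟩, hcb, hT'U c hcT' hcη, hb⟩
          · obtain ⟨d, hd, heq⟩ := hcb
            have : b = d := congrArg Prod.snd heq
            exact absurd (this ▸ hb) (Finset.mem_sdiff.1 hd).2
      have hSsub' : S ⊆ T' \ {η} := by
        intro x hx
        exact ⟨hsub (Or.inl hx), fun h => hηS (h ▸ hx)⟩
      have heq := hmax (T' \ {η}) hadm hSsub'
      ext x
      constructor
      · intro hx
        by_cases hxη : x = η
        · exact Or.inr hxη
        · exact Or.inl (heq ▸ (⟨hx, hxη⟩ : x ∈ T' \ {η}))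
      · exact fun hx => hsub hx
  · rintro ⟨⟨hSsub, hcf, hacc⟩, hmax⟩
    have hSU : S ⊆ (↑U : Set α) := by
      intro a ha
      have haArgs : a ∈ Args := hS ha
      by_contra haU
      exact hcf η (Or.inr rfl) a (Or.inl ha) (Or.inr ⟨a, hcompl a haArgs haU, rfl⟩)
    refine ⟨hSU, ⟨hSU, ?_, ?_⟩, ?_⟩
    · intro a ha b hb hab
      exact hcf a (Or.inl ha) b (Or.inl hb) (Or.inl hab.1)
    · intro x hx b hb hatt
      obtain ⟨c, hcS, hcatt⟩ := hacc x (Or.inl hx) b (Or.inl (hU hb)) (Or.inl hatt.1)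
      have hcS' : c ∈ S := by
        rcases hcS with h | h
        · exact h
        · exfalso
          rcases hcatt with hcb | hcb
          · exact hη (Finset.mem_coe.1 (Set.mem_singleton_iff.1 h ▸ (hAtts hcb).1))
          · obtain ⟨d, hd, heq⟩ := hcb
            have : b = d := congrArg Prod.snd heq
            exact absurd (this ▸ hb) (Finset.mem_sdiff.1 hd).2
      rcases hcatt with hcb | hcb
      · exact ⟨c, hcS', hcb, hSU hcS', hb⟩
      · exfalso
        obtain ⟨d, hd, heq⟩ := hcb
        have : c = η := congrArg Prod.fst heq
        exact hη (hS (this ▸ hcS'))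
    · intro S' hS' hsub
      obtain ⟨hS'sub, hS'cf, hS'acc⟩ := hS'
      have hS'U : S' ⊆ (↑U : Set α) := hS'sub
      have hηS' : η ∉ S' := fun h => hη (Finset.mem_coe.1 (hU (hS'U h)))
      have hadm : admissible ((↑Args : Set α) ∪ {η})
          (Atts ∪ {q : α × α | ∃ a ∈ A \ U, q = (η, a)}) (S' ∪ {η}) := by
        refine ⟨?_, ?_, ?_⟩
        · rintro x (hx | hx)
          · exact Or.inl (Finset.mem_coe.2 (hU (hS'U hx)))
          · exact Or.inr hx
        · rintro a ha b hb (hab | hab)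
          · have haA : a ∈ (↑Args : Set α) := (hAtts hab).1
            have hbA : b ∈ (↑Args : Set α) := (hAtts hab).2
            have haS : a ∈ S' := ha.resolve_right
              (fun h => hη (Finset.mem_coe.1 (Set.mem_singleton_iff.1 h ▸ haA)))
            have hbS : b ∈ S' := hb.resolve_right
              (fun h => hη (Finset.mem_coe.1 (Set.mem_singleton_iff.1 h ▸ hbA)))
            exact hS'cf a haS b hbS ⟨hab, hS'U haS, hS'U hbS⟩
          · obtain ⟨c, hc, heq⟩ := hab
            have hbc : b = c := congrArg Prod.snd heq
            have hbS : b ∈ S' := hb.resolve_right (fun h => by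
              apply hη
              rw [← Set.mem_singleton_iff.1 h, hbc]
              exact hA (Finset.mem_sdiff.1 hc).1)
            exact (Finset.mem_sdiff.1 hc).2 (hbc ▸ hS'U hbS)
        · rintro x (hx | hx)
          · rintro b hb (hatt | hatt)
            · have hbArgs : b ∈ Args := (hAtts hatt).1
              by_cases hbU : b ∈ U
              · obtain ⟨c, hcS, hcb⟩ := hS'acc x hx b hbU ⟨hatt, hbU, hS'U hx⟩
                exact ⟨c, Or.inl hcS, Or.inl hcb.1⟩
              · exact ⟨η, Or.inr rfl, Or.inr ⟨b, hcompl b hbArgs hbU, rfl⟩⟩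
            · obtain ⟨c, hc, heq⟩ := hatt
              have hxc : x = c := congrArg Prod.snd heq
              exact absurd (hxc ▸ hS'U hx) (Finset.mem_sdiff.1 hc).2
          · rcases hx with rfl
            rintro b hb (hatt | hatt)
            · exact absurd (hAtts hatt).2 (by simpa using hη)
            · obtain ⟨c, hc, heq⟩ := hatt
              have : x = c := congrArg Prod.snd heq
              exact absurd (this ▸ hA (Finset.mem_sdiff.1 hc).1) hη
      have hsub2 : S ∪ {η} ⊆ S' ∪ {η} := by
        rintro x (hx | hx)
        · exact Or.inl (hsub hx)
        · exact Or.inr hx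
      have heq := hmax (S' ∪ {η}) hadm hsub2
      ext x
      constructor
      · intro hx
        have : x ∈ S ∪ {η} := heq ▸ (Or.inl hx : x ∈ S' ∪ {η})
        rcases this with h | h
        · exact h
        · exact absurd (h ▸ hx) hηS'
      · exact fun hx => hsub hx

open Classical in
theorem stmt_16 [DecidableEq α] (Args A : Finset α) (hA : A ⊆ Args)
    (Atts : Set (α × α)) (hAtts : Atts ⊆ (↑Args : Set α) ×ˢ (↑Args : Set α))
    (p : α → ℝ) (hp : ∀ a ∈ A, 0 < p a ∧ p a ≤ 1)
    (η : α) (hη : η ∉ Args)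
    (S : Set α) (hS : S ⊆ (↑Args : Set α)) :
    ∑ U ∈ Args.powerset.filter (fun U => Args \ A ⊆ U ∧ S ⊆ (↑U : Set α) ∧
        preferred (↑U : Set α) (Atts ∩ ((↑U : Set α) ×ˢ (↑U : Set α))) S),
      ((∏ a ∈ U ∩ A, p a) * ∏ a ∈ A \ U, (1 - p a)) =
    ∑ T ∈ A.powerset.filter (fun T =>
        preferred ((↑Args : Set α) ∪ {η})
          (Atts ∪ {q : α × α | ∃ a ∈ T, q = (η, a)}) (S ∪ {η})),
      ((∏ a ∈ T, (1 - p a)) * ∏ a ∈ A \ T, p a) := by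
  refine Finset.sum_nbij' (fun U => A \ U) (fun T => Args \ T) ?_ ?_ ?_ ?_ ?_
  · intro U hU
    rw [Finset.mem_filter, Finset.mem_powerset] at hU ⊢
    obtain ⟨hUsub, hUA, hSU, hpref⟩ := hU
    refine ⟨Finset.sdiff_subset, ?_⟩
    exact (aux_iff Args A hA Atts hAtts η hη S hS U hUsub hUA).1 ⟨hSU, hpref⟩
  · intro T hT
    rw [Finset.mem_filter, Finset.mem_powerset] at hT ⊢
    obtain ⟨hTsub, hpref⟩ := hT
    have hAU : A \ (Args \ T) = T := by
      ext x
      simp only [Finset.mem_sdiff]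
      constructor
      · rintro ⟨hxA, hx⟩
        by_contra hxT
        exact hx ⟨hA hxA, hxT⟩
      · intro hxT
        exact ⟨hTsub hxT, fun h => h.2 hxT⟩
    have hUA : Args \ A ⊆ Args \ T := Finset.sdiff_subset_sdiff le_rfl hTsub
    refine ⟨Finset.sdiff_subset, hUA, ?_⟩
    have := (aux_iff Args A hA Atts hAtts η hη S hS (Args \ T) Finset.sdiff_subset hUA).2
    rw [hAU] at this
    exact this hpref
  · intro U hU
    rw [Finset.mem_filter, Finset.mem_powerset] at hU
    obtain ⟨hUsub, hUA, _, _⟩ := hU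
    ext x
    simp only [Finset.mem_sdiff]
    constructor
    · rintro ⟨hxArgs, hx⟩
      by_contra hxU
      exact hx ⟨(by by_contra hxA; exact hxU (hUA (Finset.mem_sdiff.2 ⟨hxArgs, hxA⟩))), hxU⟩
    · intro hxU
      exact ⟨hUsub hxU, fun h => h.2 hxU⟩
  · intro T hT
    rw [Finset.mem_filter, Finset.mem_powerset] at hT
    ext x
    simp only [Finset.mem_sdiff]
    constructor
    · rintro ⟨hxA, hx⟩
      by_contra hxT
      exact hx ⟨hA hxA, hxT⟩
    · intro hxT
      exact ⟨hT.1 hxT, fun h => h.2 hxT⟩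
  · intro U hU
    have h1 : A \ (A \ U) = A ∩ U := sdiff_sdiff_right_self
    rw [h1, Finset.inter_comm, mul_comm]
end

section
/- Let (Args, Atts) be an AAF with Args finite, let A ⊆ Args be the probabilistic arguments with probabilities p : Args → ℝ satisfying 0 < p(a) ≤ 1 for all a ∈ A, and let η ∉ Args. For a possible world U with Args \ A ⊆ U ⊆ Args, let P(U) = ∏_{a ∈ U ∩ A} p(a) · ∏_{a ∈ A \ U} (1 − p(a)) and let F_U = (U, Atts ∩ (U × U)). For T ⊆ A, let P'(T) = ∏_{a ∈ T} (1 − p(a)) · ∏_{a ∈ A \ T} p(a) and let F'_T = (Args ∪ {η}, Atts ∪ {(η,a) : a ∈ T}). Then for every S ⊆ Args: ∑_{U : Args\A ⊆ U ⊆ Args, S ⊆ U, S grounded in F_U} P(U) = ∑_{T ⊆ A : S ∪ {η} grounded in F'_T} P'(T). -/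
variable {α : Type*}

def grounded (Args : Set α) (Atts : Set (α × α)) (S : Set α) : Prop :=
  complete Args Atts S ∧ ∀ T : Set α, complete Args Atts T → T ⊆ S → T = S

lemma grounded_corr [DecidableEq α] (Args A : Finset α) (hA : A ⊆ Args)
    (Atts : Set (α × α)) (hAtts : Atts ⊆ (↑Args : Set α) ×ˢ (↑Args : Set α))
    (η : α) (hη : η ∉ Args) (S : Set α) (hS : S ⊆ (↑Args : Set α))
    (T : Finset α) (hT : T ⊆ A) :
    (S ⊆ (↑(Args \ T) : Set α) ∧
      grounded (↑(Args \ T) : Set α)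
        (Atts ∩ ((↑(Args \ T) : Set α) ×ˢ (↑(Args \ T) : Set α))) S) ↔
    grounded ((↑Args : Set α) ∪ {η})
      (Atts ∪ {q : α × α | ∃ a ∈ T, q = (η, a)}) (S ∪ {η}) := by
  classical
  set V : Set α := (↑(Args \ T) : Set α) with hVdef
  set E : Set (α × α) := {q : α × α | ∃ a ∈ T, q = (η, a)} with hEdef
  set B : Set α := (↑Args : Set α) ∪ {η} with hBdef
  set Atts' : Set (α × α) := Atts ∪ E with hAdef
  set AttsV : Set (α × α) := Atts ∩ (V ×ˢ V) with hAVdef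
  have hVmem : ∀ x : α, x ∈ V ↔ x ∈ Args ∧ x ∉ T := by
    intro x; simp [hVdef, Finset.mem_sdiff]
  have hηV : η ∉ V := fun h => hη ((hVmem η).mp h).1
  have hVArgs : V ⊆ (↑Args : Set α) := fun x hx => (hVmem x).mp hx |>.1
  have hηS : η ∉ S := fun h => hη (hS h)
  -- nothing attacks η
  have hno : ∀ x : α, (x, η) ∉ Atts' := by
    rintro x (h | ⟨a, ha, hq⟩)
    · exact hη (by exact_mod_cast (hAtts h).2)
    · have : η = a := congrArg Prod.snd hq
      exact hη (hA (hT (this ▸ ha)))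
  -- η attacks exactly T
  have hηatt : ∀ a : α, (η, a) ∈ Atts' ↔ a ∈ T := by
    intro a
    constructor
    · rintro (h | ⟨b, hb, hq⟩)
      · exact absurd (by exact_mod_cast (hAtts h).1) hη
      · have : a = b := congrArg Prod.snd hq
        exact this ▸ hb
    · intro h; exact Or.inr ⟨a, h, rfl⟩
  -- other attacks are in Atts
  have hnotE : ∀ x a : α, (x, a) ∈ Atts' → x ≠ η → (x, a) ∈ Atts := by
    rintro x a (h | ⟨b, hb, hq⟩) hx
    · exact h
    · exact absurd (congrArg Prod.fst hq) hx
  -- complete correspondence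
  have hAB : ∀ C : Set α, C ⊆ V →
      (complete V AttsV C ↔ complete B Atts' (C ∪ {η})) := by
    intro C hCV
    have hηC : η ∉ C := fun h => hηV (hCV h)
    constructor
    · rintro ⟨⟨hsub, hcf, hacc⟩, hcomp⟩
      refine ⟨⟨?_, ?_, ?_⟩, ?_⟩
      · exact Set.union_subset (fun x hx => Or.inl (hVArgs (hCV hx)))
          (fun x hx => Or.inr hx)
      · rintro a (ha | ha) b (hb | hb) hab
        · rcases hab with h | ⟨c, hc, hq⟩
          · exact hcf a ha b hb ⟨h, hCV ha, hCV hb⟩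
          · have h2 : a = η := congrArg Prod.fst hq
            exact hηC (h2 ▸ ha)
        · exact hno a (hb ▸ hab)
        · have : b ∈ T := (hηatt b).mp (ha ▸ hab)
          exact ((hVmem b).mp (hCV hb)).2 this
        · exact hno a (hb ▸ hab)
      · rintro a (ha | ha)
        · intro b hbB hba
          by_cases hbη : b = η
          · have : a ∈ T := (hηatt a).mp (hbη ▸ hba)
            exact absurd this ((hVmem a).mp (hCV ha)).2
          · have hbArgs : b ∈ (↑Args : Set α) := by
              rcases hbB with h | h
              · exact h
              · exact absurd h hbη
            have hbAtts : (b, a) ∈ Atts := hnotE b a hba hbη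
            by_cases hbT : b ∈ T
            · exact ⟨η, Or.inr rfl, Or.inr ⟨b, hbT, rfl⟩⟩
            · have hbV : b ∈ V := (hVmem b).mpr ⟨by exact_mod_cast hbArgs, hbT⟩
              obtain ⟨c, hc, hcb⟩ := hacc a ha b hbV ⟨hbAtts, hbV, hCV ha⟩
              exact ⟨c, Or.inl hc, Or.inl hcb.1⟩
        · intro b hbB hba
          exact absurd (ha ▸ hba) (hno b)
      · rintro a (haArgs | haη) hacc'
        · by_cases haT : a ∈ T
          · obtain ⟨c, _, hcη⟩ := hacc' η (Or.inr rfl) ((hηatt a).mpr haT)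
            exact absurd hcη (hno c)
          · have haV : a ∈ V := (hVmem a).mpr ⟨by exact_mod_cast haArgs, haT⟩
            have : acceptable V AttsV C a := by
              intro b hbV hba
              obtain ⟨c, hc, hcb⟩ := hacc' b (Or.inl (hVArgs hbV)) (Or.inl hba.1)
              rcases hc with hc | hc
              · have hcη : c ≠ η := fun h => hηC (h ▸ hc)
                exact ⟨c, hc, hnotE c b hcb hcη, hCV hc, hbV⟩
              · have : b ∈ T := (hηatt b).mp (hc ▸ hcb)
                exact absurd this ((hVmem b).mp hbV).2
            exact Or.inl (hcomp a haV this)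
        · exact Or.inr haη
    · rintro ⟨⟨hsub, hcf, hacc⟩, hcomp⟩
      refine ⟨⟨hCV, ?_, ?_⟩, ?_⟩
      · intro a ha b hb hab
        exact hcf a (Or.inl ha) b (Or.inl hb) (Or.inl hab.1)
      · intro a ha b hbV hba
        obtain ⟨c, hc, hcb⟩ := hacc a (Or.inl ha) b (Or.inl (hVArgs hbV)) (Or.inl hba.1)
        rcases hc with hc | hc
        · have hcη : c ≠ η := fun h => hηC (h ▸ hc)
          exact ⟨c, hc, hnotE c b hcb hcη, hCV hc, hbV⟩
        · have : b ∈ T := (hηatt b).mp (hc ▸ hcb)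
          exact absurd this ((hVmem b).mp hbV).2
      · intro a haV haccV
        have haccB : acceptable B Atts' (C ∪ {η}) a := by
          intro b hbB hba
          by_cases hbη : b = η
          · have : a ∈ T := (hηatt a).mp (hbη ▸ hba)
            exact absurd this ((hVmem a).mp haV).2
          · have hbArgs : b ∈ (↑Args : Set α) := by
              rcases hbB with h | h
              · exact h
              · exact absurd h hbη
            have hbAtts : (b, a) ∈ Atts := hnotE b a hba hbη
            by_cases hbT : b ∈ T
            · exact ⟨η, Or.inr rfl, Or.inr ⟨b, hbT, rfl⟩⟩
            · have hbV : b ∈ V := (hVmem b).mpr ⟨by exact_mod_cast hbArgs, hbT⟩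
              obtain ⟨c, hc, hcb⟩ := haccV b hbV ⟨hbAtts, hbV, haV⟩
              exact ⟨c, Or.inl hc, Or.inl hcb.1⟩
        have := hcomp a (Or.inl (hVArgs haV)) haccB
        rcases this with h | h
        · exact h
        · exact absurd (h ▸ haV) hηV
  -- structure of big complete sets
  have hB2 : ∀ C' : Set α, complete B Atts' C' → η ∈ C' ∧ C' \ {η} ⊆ V := by
    rintro C' ⟨⟨hsub, hcf, _⟩, hcomp⟩
    have hηC' : η ∈ C' := by
      refine hcomp η (Or.inr rfl) ?_
      intro b _ hb
      exact absurd hb (hno b)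
    refine ⟨hηC', ?_⟩
    rintro a ⟨haC, haη⟩
    have haArgs : a ∈ (↑Args : Set α) := by
      rcases hsub haC with h | h
      · exact h
      · exact absurd h haη
    have haT : a ∉ T := by
      intro h
      exact hcf η hηC' a haC ((hηatt a).mpr h)
    exact (hVmem a).mpr ⟨by exact_mod_cast haArgs, haT⟩
  constructor
  · rintro ⟨hSV, hScompl, hSmin⟩
    refine ⟨(hAB S hSV).mp hScompl, ?_⟩
    intro C' hC' hsub'
    obtain ⟨hηC', hC'V⟩ := hB2 C' hC'
    have hCeq : (C' \ {η}) ∪ {η} = C' := by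
      ext x
      simp only [Set.mem_union, Set.mem_diff, Set.mem_singleton_iff]
      constructor
      · rintro (⟨h, _⟩ | h)
        · exact h
        · exact h ▸ hηC'
      · intro h
        by_cases hx : x = η
        · exact Or.inr hx
        · exact Or.inl ⟨h, hx⟩
    have hCc : complete V AttsV (C' \ {η}) := by
      refine (hAB (C' \ {η}) hC'V).mpr ?_
      rw [hCeq]; exact hC'
    have hCS : C' \ {η} ⊆ S := by
      rintro x ⟨hx, hxη⟩
      rcases hsub' hx with h | h
      · exact h
      · exact absurd h hxη
    have := hSmin (C' \ {η}) hCc hCS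
    rw [← hCeq, this]
  · rintro ⟨hcompl', hmin'⟩
    obtain ⟨_, hsubV⟩ := hB2 _ hcompl'
    have hSV : S ⊆ V := by
      intro x hx
      exact hsubV ⟨Or.inl hx, fun h => hηS (h ▸ hx)⟩
    refine ⟨hSV, (hAB S hSV).mpr hcompl', ?_⟩
    intro C hC hCS
    have hCV : C ⊆ V := hCS.trans hSV
    have hηC : η ∉ C := fun h => hηV (hCV h)
    have hC' := (hAB C hCV).mp hC
    have heq := hmin' (C ∪ {η}) hC' (Set.union_subset_union_left _ hCS)
    ext x
    constructor
    · intro hx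
      have hx' : x ∈ S ∪ {η} := heq ▸ (Or.inl hx : x ∈ C ∪ {η})
      rcases hx' with h | h
      · exact h
      · exact absurd (h ▸ hx) hηC
    · intro hx
      have hx' : x ∈ C ∪ {η} := heq.symm ▸ (Or.inl hx : x ∈ S ∪ {η})
      rcases hx' with h | h
      · exact h
      · exact absurd (h ▸ hx) hηS

open Classical in
theorem stmt_17 [DecidableEq α] (Args A : Finset α) (hA : A ⊆ Args)
    (Atts : Set (α × α)) (hAtts : Atts ⊆ (↑Args : Set α) ×ˢ (↑Args : Set α))
    (p : α → ℝ) (hp : ∀ a ∈ A, 0 < p a ∧ p a ≤ 1)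
    (η : α) (hη : η ∉ Args)
    (S : Set α) (hS : S ⊆ (↑Args : Set α)) :
    ∑ U ∈ Args.powerset.filter (fun U => Args \ A ⊆ U ∧ S ⊆ (↑U : Set α) ∧
        grounded (↑U : Set α) (Atts ∩ ((↑U : Set α) ×ˢ (↑U : Set α))) S),
      ((∏ a ∈ U ∩ A, p a) * ∏ a ∈ A \ U, (1 - p a)) =
    ∑ T ∈ A.powerset.filter (fun T =>
        grounded ((↑Args : Set α) ∪ {η})
          (Atts ∪ {q : α × α | ∃ a ∈ T, q = (η, a)}) (S ∪ {η})),
      ((∏ a ∈ T, (1 - p a)) * ∏ a ∈ A \ T, p a) := by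
  classical
  have key1 : ∀ U : Finset α, U ⊆ Args → Args \ A ⊆ U → Args \ (A \ U) = U := by
    intro U hU1 hU2
    ext a
    simp only [Finset.mem_sdiff]
    constructor
    · rintro ⟨ha, h⟩
      by_cases haA : a ∈ A
      · by_contra haU
        exact h ⟨haA, haU⟩
      · exact hU2 (Finset.mem_sdiff.mpr ⟨ha, haA⟩)
    · intro ha
      exact ⟨hU1 ha, fun h => h.2 ha⟩
  have key2 : ∀ T : Finset α, T ⊆ A → A \ (Args \ T) = T := by
    intro T hT
    ext a
    simp only [Finset.mem_sdiff]
    constructor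
    · rintro ⟨ha, h⟩
      by_contra haT
      exact h ⟨hA ha, haT⟩
    · intro ha
      exact ⟨hT ha, fun h => h.2 ha⟩
  refine Finset.sum_nbij' (fun U => A \ U) (fun T => Args \ T) ?_ ?_ ?_ ?_ ?_
  · intro U hU
    rw [Finset.mem_filter, Finset.mem_powerset] at hU
    obtain ⟨hU1, hU2, hU3, hU4⟩ := hU
    rw [Finset.mem_filter, Finset.mem_powerset]
    refine ⟨Finset.sdiff_subset, ?_⟩
    have := (grounded_corr Args A hA Atts hAtts η hη S hS (A \ U)
      Finset.sdiff_subset).mp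
    rw [key1 U hU1 hU2] at this
    exact this ⟨hU3, hU4⟩
  · intro T hT
    rw [Finset.mem_filter, Finset.mem_powerset] at hT
    obtain ⟨hT1, hT2⟩ := hT
    rw [Finset.mem_filter, Finset.mem_powerset]
    have := (grounded_corr Args A hA Atts hAtts η hη S hS T hT1).mpr hT2
    exact ⟨Finset.sdiff_subset, Finset.sdiff_subset_sdiff (le_refl Args) hT1, this.1, this.2⟩
  · intro U hU
    rw [Finset.mem_filter, Finset.mem_powerset] at hU
    exact key1 U hU.1 hU.2.1
  · intro T hT
    rw [Finset.mem_filter, Finset.mem_powerset] at hT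
    exact key2 T hT.1
  · intro U hU
    rw [Finset.sdiff_sdiff_self_left, Finset.inter_comm A U, mul_comm]
end

section
/- Let (Args, Atts) be an AAF with Args finite, let A ⊆ Args be the probabilistic arguments with probabilities p : Args → ℝ satisfying 0 < p(a) ≤ 1 for all a ∈ A, and let η ∉ Args. For a possible world U with Args \ A ⊆ U ⊆ Args, let P(U) = ∏_{a ∈ U ∩ A} p(a) · ∏_{a ∈ A \ U} (1 − p(a)) and let F_U = (U, Atts ∩ (U × U)). For T ⊆ A, let P'(T) = ∏_{a ∈ T} (1 − p(a)) · ∏_{a ∈ A \ T} p(a) and let F'_T = (Args ∪ {η}, Atts ∪ {(η,a) : a ∈ T}). Then for every S ⊆ Args: ∑_{U : Args\A ⊆ U ⊆ Args, S ⊆ U, S stable in F_U} P(U) = ∑_{T ⊆ A : S ∪ {η} stable in F'_T} P'(T). -/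
variable {α : Type*}

open Classical in
theorem stmt_18 [DecidableEq α] (Args A : Finset α) (hA : A ⊆ Args)
    (Atts : Set (α × α)) (hAtts : Atts ⊆ (↑Args : Set α) ×ˢ (↑Args : Set α))
    (p : α → ℝ) (hp : ∀ a ∈ A, 0 < p a ∧ p a ≤ 1)
    (η : α) (hη : η ∉ Args)
    (S : Set α) (hS : S ⊆ (↑Args : Set α)) :
    ∑ U ∈ Args.powerset.filter (fun U => Args \ A ⊆ U ∧ S ⊆ (↑U : Set α) ∧
        stable (↑U : Set α) (Atts ∩ ((↑U : Set α) ×ˢ (↑U : Set α))) S),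
      ((∏ a ∈ U ∩ A, p a) * ∏ a ∈ A \ U, (1 - p a)) =
    ∑ T ∈ A.powerset.filter (fun T =>
        stable ((↑Args : Set α) ∪ {η})
          (Atts ∪ {q : α × α | ∃ a ∈ T, q = (η, a)}) (S ∪ {η})),
      ((∏ a ∈ T, (1 - p a)) * ∏ a ∈ A \ T, p a) := by
  refine Finset.sum_nbij' (fun U => A \ U) (fun T => Args \ T) ?_ ?_ ?_ ?_ ?_
  · -- hi
    intro U hU
    simp only [Finset.mem_filter, Finset.mem_powerset] at hU ⊢
    obtain ⟨hUA, hsub, hSU, hSsub, hcf, hatt⟩ := hU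
    refine ⟨Finset.sdiff_subset, ?_, ?_, ?_⟩
    · intro x hx
      rcases hx with hx | hx
      · exact Or.inl (hS hx)
      · exact Or.inr hx
    · -- conflict free
      intro a ha b hb hab
      rcases hab with hab | hab
      · have haA : a ∈ (↑Args : Set α) := (hAtts hab).1
        have hbA : b ∈ (↑Args : Set α) := (hAtts hab).2
        have haS : a ∈ S := by
          rcases ha with h | h
          · exact h
          · exact absurd (h ▸ haA) hη
        have hbS : b ∈ S := by
          rcases hb with h | h
          · exact h
          · exact absurd (h ▸ hbA) hη
        exact hcf a haS b hbS ⟨hab, hSU haS, hSU hbS⟩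
      · obtain ⟨c, hc, hcq⟩ := hab
        have : b = c := congrArg Prod.snd hcq
        subst this
        have hbArgs : b ∈ Args := hA (Finset.mem_sdiff.mp hc).1
        have hbS : b ∈ S := by
          rcases hb with h | h
          · exact h
          · exact absurd (h ▸ hbArgs) hη
        exact (Finset.mem_sdiff.mp hc).2 (hSU hbS)
    · -- attack
      intro a ha
      obtain ⟨haU, haS⟩ := ha
      have haArgs : a ∈ Args := by
        rcases haU with h | h
        · exact_mod_cast h
        · exact (haS (Or.inr h)).elim
      have haS' : a ∉ S := fun h => haS (Or.inl h)
      by_cases haU' : a ∈ U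
      · obtain ⟨b, hbS, hbatt, _⟩ := hatt a ⟨haU', haS'⟩
        exact ⟨b, Or.inl hbS, Or.inl hbatt⟩
      · have haA : a ∈ A := by
          by_contra h
          exact haU' (hsub (Finset.mem_sdiff.mpr ⟨haArgs, h⟩))
        exact ⟨η, Or.inr rfl, Or.inr ⟨a, Finset.mem_sdiff.mpr ⟨haA, haU'⟩, rfl⟩⟩
  · -- hj
    intro T hT
    simp only [Finset.mem_filter, Finset.mem_powerset] at hT ⊢
    obtain ⟨hTA, hSsub, hcf, hatt⟩ := hT
    have hST : ∀ a ∈ S, a ∉ T := by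
      intro a haS haT
      exact hcf η (Or.inr rfl) a (Or.inl haS) (Or.inr ⟨a, haT, rfl⟩)
    have hSU : S ⊆ (↑(Args \ T) : Set α) := by
      intro a haS
      simp only [Finset.coe_sdiff, Set.mem_diff, Finset.mem_coe]
      exact ⟨hS haS, hST a haS⟩
    refine ⟨Finset.sdiff_subset, ?_, hSU, hSU, ?_, ?_⟩
    · intro a ha
      simp only [Finset.mem_sdiff] at ha ⊢
      exact ⟨ha.1, fun h => ha.2 (hTA h)⟩
    · intro a haS b hbS hab
      exact hcf a (Or.inl haS) b (Or.inl hbS) (Or.inl hab.1)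
    · intro a ha
      obtain ⟨haU, haS⟩ := ha
      simp only [Finset.coe_sdiff, Set.mem_diff, Finset.mem_coe] at haU
      have haη : a ≠ η := fun h => hη (h ▸ haU.1)
      obtain ⟨b, hbS, hbatt⟩ := hatt a ⟨Or.inl haU.1, fun h => by
        rcases h with h | h
        · exact haS h
        · exact haη h⟩
      have hbη : b ≠ η := by
        intro h
        subst h
        rcases hbatt with h | h
        · exact hη (hAtts h).1
        · obtain ⟨c, hc, hcq⟩ := h
          have : a = c := congrArg Prod.snd hcq
          exact haU.2 (this ▸ hc)
      have hbS' : b ∈ S := by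
        rcases hbS with h | h
        · exact h
        · exact absurd h hbη
      have hbatt' : (b, a) ∈ Atts := by
        rcases hbatt with h | h
        · exact h
        · obtain ⟨c, _, hcq⟩ := h
          exact absurd (congrArg Prod.fst hcq) hbη
      refine ⟨b, hbS', hbatt', hSU hbS', ?_⟩
      simp only [Finset.coe_sdiff, Set.mem_diff, Finset.mem_coe]
      exact haU
  · -- left inv
    intro U hU
    simp only [Finset.mem_filter, Finset.mem_powerset] at hU
    obtain ⟨hUA, hsub, _⟩ := hU
    ext a
    simp only [Finset.mem_sdiff]
    constructor
    · rintro ⟨haArgs, h⟩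
      by_cases haA : a ∈ A
      · by_contra haU
        exact h ⟨haA, haU⟩
      · exact hsub (Finset.mem_sdiff.mpr ⟨haArgs, haA⟩)
    · intro haU
      exact ⟨hUA haU, fun h => h.2 haU⟩
  · -- right inv
    intro T hT
    simp only [Finset.mem_filter, Finset.mem_powerset] at hT
    ext a
    simp only [Finset.mem_sdiff]
    constructor
    · rintro ⟨haA, h⟩
      by_contra haT
      exact h ⟨hA haA, haT⟩
    · intro haT
      exact ⟨hT.1 haT, fun h => h.2 haT⟩
  · -- weights
    intro U hU
    have : A \ (A \ U) = U ∩ A := by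
      rw [Finset.sdiff_sdiff_self_left, Finset.inter_comm]
    rw [this, mul_comm]
end
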